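/- Let ζ be an action of a based scheme U on a based scheme T, and let T̃ = {[1_Y, t] : t ∈ τ} ⊆ U⋉_ζ T. Then T̃ is a normal closed subset of the scheme U⋉_ζ T, and the subscheme of U⋉_ζ T defined by the coset (y*, x*)T̃ is isomorphic to T. -/
import Mathlib


/-!
Common framework for association schemes, following the paper
"A new semidirect product for association schemes".
-/

/-- The diagonal relation `1_X` on a set `X`. -/
def diagRel (X : Type) : Set (X × X) := {w | w.1 = w.2}

/-- The transpose `s*` of a relation. -/
def transp {X : Type} (s : Set (X × X)) : Set (X × X) := Prod.swap '' s

/-- The structure constant `a_{pqr}`: for `(x,y) ∈ r`, the number of `z` with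
`(x,z) ∈ p` and `(z,y) ∈ q` (well-defined for elements of a scheme). -/
noncomputable def aC {X : Type} (p q r : Set (X × X)) : ℕ :=
  sSup {n | ∃ w ∈ r, n = Nat.card {z : X // (w.1, z) ∈ p ∧ (z, w.2) ∈ q}}

/-- `S` is an association scheme on `X`. -/
def IsScheme {X : Type} (S : Set (Set (X × X))) : Prop :=
  (∀ s ∈ S, s.Nonempty) ∧
  (∀ w : X × X, ∃! s, s ∈ S ∧ w ∈ s) ∧
  diagRel X ∈ S ∧
  (∀ s ∈ S, transp s ∈ S) ∧
  (∀ p ∈ S, ∀ q ∈ S, ∀ r ∈ S, ∀ w ∈ r,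
    Nat.card {z : X // (w.1, z) ∈ p ∧ (z, w.2) ∈ q} = aC p q r)

/-- Complex product of two relations relative to a scheme `S`:
`pq = {r ∈ S : a_{pqr} > 0}`. -/
noncomputable def cmulS {X : Type} (S : Set (Set (X × X))) (p q : Set (X × X)) :
    Set (Set (X × X)) :=
  {r | r ∈ S ∧ 0 < aC p q r}

/-- Complex product of two subsets of a scheme. -/
noncomputable def setMulS {X : Type} (S : Set (Set (X × X)))
    (Pp Qq : Set (Set (X × X))) : Set (Set (X × X)) :=
  ⋃ p ∈ Pp, ⋃ q ∈ Qq, cmulS S p q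

/-- `T` is a closed subset of the scheme `S` (i.e. `T ⊆ S` and `T*T ⊆ T`). -/
def IsClosedIn {X : Type} (S T : Set (Set (X × X))) : Prop :=
  T ⊆ S ∧ ∀ p ∈ T, ∀ q ∈ T, cmulS S (transp p) q ⊆ T

/-- `T` is a normal subset of the scheme `S` (i.e. `pT = Tp` for all `p ∈ S`). -/
noncomputable def IsNormalIn {X : Type} (S T : Set (Set (X × X))) : Prop :=
  ∀ p ∈ S, setMulS S {p} T = setMulS S T {p}

/-- `xs = {y : (x,y) ∈ s}`. -/
def pimg {X : Type} (s : Set (X × X)) (x : X) : Set X := {y | (x, y) ∈ s}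

/-- The coset `xT` of a (closed) subset `T` of a scheme. -/
def coset {X : Type} (T : Set (Set (X × X))) (x : X) : Set X :=
  {y | ∃ t ∈ T, (x, y) ∈ t}

/-- The set `X/T` of cosets. -/
def cosets {X : Type} (T : Set (Set (X × X))) : Set (Set X) :=
  {C | ∃ x, C = coset T x}

/-- The quotient relation `s^T` on cosets. -/
def quotRel {X : Type} (T : Set (Set (X × X))) (s : Set (X × X)) :
    Set (Set X × Set X) :=
  {w | ∃ x₁ x₂, w = (coset T x₁, coset T x₂) ∧
    ∃ p ∈ s, p.1 ∈ coset T x₁ ∧ p.2 ∈ coset T x₂}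

/-- The relations of the quotient scheme `S//T`. -/
def quotS {X : Type} (S T : Set (Set (X × X))) : Set (Set (Set X × Set X)) :=
  {r | ∃ s ∈ S, r = quotRel T s}

/-- A presentation of a (based) scheme: a set of points inside an ambient type,
a set of relations, and a basepoint. -/
structure Pres (P : Type) where
  pts : Set P
  rels : Set (Set (P × P))
  base : P

/-- A scheme `S` on the whole of `X`, based at `x0`, as a presentation. -/
def fullPres {X : Type} (S : Set (Set (X × X))) (x0 : X) : Pres X :=
  ⟨Set.univ, S, x0⟩

/-- The quotient scheme `S//T` on `X/T`, based at `x0 T`, as a presentation. -/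
def quotPres {X : Type} (S T : Set (Set (X × X))) (x0 : X) : Pres (Set X) :=
  ⟨cosets T, quotS S T, coset T x0⟩

/-- The subscheme of a scheme defined by the coset `xT` of a closed subset `T`,
as a presentation. -/
def subPres {X : Type} (T : Set (Set (X × X))) (x : X) : Pres X :=
  ⟨coset T x, {r | ∃ t ∈ T, r = t ∩ (coset T x ×ˢ coset T x)}, x⟩

/-- `f` is a morphism of schemes between two presentations: it maps points to
points, and pairs lying in the same relation to pairs lying in the same relation. -/
def IsMorOn {P Q : Type} (A : Pres P) (B : Pres Q) (f : P → Q) : Prop :=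
  Set.MapsTo f A.pts B.pts ∧
  ∀ s ∈ A.rels, ∀ w ∈ s, ∀ w' ∈ s,
    ∃ t ∈ B.rels, (f w.1, f w.2) ∈ t ∧ (f w'.1, f w'.2) ∈ t

/-- The induced map on scheme elements sends `s` to `t` (i.e. `s φ_S = t`):
every pair of `s` is mapped into `t`. -/
def elemMapsTo {P Q : Type} (f : P → Q) (s : Set (P × P)) (t : Set (Q × Q)) : Prop :=
  ∀ w ∈ s, (f w.1, f w.2) ∈ t

/-- `f` is an isomorphism of schemes: a morphism which is bijective on points and
whose induced map on scheme elements is bijective. -/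
def IsIsoOn {P Q : Type} (A : Pres P) (B : Pres Q) (f : P → Q) : Prop :=
  IsMorOn A B f ∧ Set.BijOn f A.pts B.pts ∧
  ∀ t ∈ B.rels, ∃! s, s ∈ A.rels ∧ elemMapsTo f s t

/-- A based isomorphism of schemes. -/
def IsBasedIsoOn {P Q : Type} (A : Pres P) (B : Pres Q) (f : P → Q) : Prop :=
  IsIsoOn A B f ∧ f A.base = B.base

/-- A based association scheme on a finite based set. -/
structure BScheme : Type 1 where
  X : Type
  fin : Fintype X
  base : X
  S : Set (Set (X × X))
  isScheme : IsScheme S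

/-- A morphism in the category 𝒞: a normal closed subset on each side together
with a based isomorphism between the corresponding quotient schemes. -/
structure HomC (A B : BScheme) where
  TN : Set (Set (A.X × A.X))
  UN : Set (Set (B.X × B.X))
  TN_cl : IsClosedIn A.S TN
  TN_n : IsNormalIn A.S TN
  UN_cl : IsClosedIn B.S UN
  UN_n : IsNormalIn B.S UN
  f : Set A.X → Set B.X
  iso : IsBasedIsoOn (quotPres A.S TN A.base) (quotPres B.S UN B.base) f

/-- `t^{T_φ} φ̃ = u^{U_φ}`: the induced map on quotient scheme elements sends
the class of `t` to the class of `u`. -/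
def elemRel {A B : BScheme} (φ : HomC A B) (t : Set (A.X × A.X))
    (u : Set (B.X × B.X)) : Prop :=
  elemMapsTo φ.f (quotRel φ.TN t) (quotRel φ.UN u)

/-- The normal closed subset `T_{φψ}` of the composite. -/
def Tcomp {A B C : BScheme} (φ : HomC A B) (ψ : HomC B C) :
    Set (Set (A.X × A.X)) :=
  {t | t ∈ A.S ∧ ∃ u ∈ B.S, elemRel φ t u ∧ elemRel ψ u (diagRel C.X)}

/-- The normal closed subset `V_{φψ}` of the composite. -/
def Vcomp {A B C : BScheme} (φ : HomC A B) (ψ : HomC B C) :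
    Set (Set (C.X × C.X)) :=
  {v | v ∈ C.S ∧ ∃ u ∈ B.S, elemRel φ (diagRel A.X) u ∧ elemRel ψ u v}

/-- `ρ` is a composite of `φ` and `ψ` in the category 𝒞. -/
def IsComposite {A B C : BScheme} (φ : HomC A B) (ψ : HomC B C) (ρ : HomC A C) : Prop :=
  ρ.TN = Tcomp φ ψ ∧ ρ.UN = Vcomp φ ψ ∧
  ∀ (x : A.X) (y : B.X) (z : C.X),
    φ.f (coset φ.TN x) = coset φ.UN y →
    ψ.f (coset ψ.TN y) = coset ψ.UN z →
    ρ.f (coset (Tcomp φ ψ) x) = coset (Vcomp φ ψ) z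

/-- The identity morphism of 𝒞 at `A`: both normal closed subsets are `{1_X}`
and the isomorphism is the identity of `A//{1_X}`. -/
def IsIdHom {A : BScheme} (ι : HomC A A) : Prop :=
  ι.TN = {diagRel A.X} ∧ ι.UN = {diagRel A.X} ∧
  ∀ x : A.X, ι.f (coset {diagRel A.X} x) = coset {diagRel A.X} x

/-- A `τ_T`-scheme on the based set underlying `T`. -/
structure TauSchemeOn (T : BScheme) where
  rels : Set (Set (T.X × T.X))
  isScheme : IsScheme rels
  alpha : Set (T.X × T.X) → Set (T.X × T.X)
  alpha_bij : Set.BijOn alpha T.S rels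
  alpha_one : alpha (diagRel T.X) = diagRel T.X
  alpha_star : ∀ p ∈ T.S, alpha (transp p) = transp (alpha p)
  alpha_const : ∀ p ∈ T.S, ∀ q ∈ T.S, ∀ r ∈ T.S,
    aC p q r = aC (alpha p) (alpha q) (alpha r)

/-- The based scheme underlying a `τ`-scheme. -/
abbrev TauSchemeOn.toB {T : BScheme} (Z : TauSchemeOn T) : BScheme :=
  ⟨T.X, T.fin, T.base, Z.rels, Z.isScheme⟩

/-- An action `ζ` of a based scheme `U` on a based scheme `T`. -/
structure SchemeAction (U T : BScheme) where
  /-- the `τ`-scheme `ζ_y = (T_y, α^y)` for each `y ∈ Y` -/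
  Z : U.X → TauSchemeOn T
  /-- the morphism `ζ_{y₁}^{y₂} ∈ Hom_𝒞(T_{y₁}, T_{y₂})` -/
  hom : ∀ y1 y2 : U.X, HomC (Z y1).toB (Z y2).toB
  /-- (1) `T_{y*} = T` -/
  base_rels : (Z U.base).rels = T.S
  /-- (1) `α^{y*} = id` -/
  base_alpha : ∀ p, (Z U.base).alpha p = p
  /-- (2) `ζ_y^y` is the identity morphism -/
  hom_refl_TN : ∀ y : U.X, (hom y y).TN = {diagRel T.X}
  hom_refl_UN : ∀ y : U.X, (hom y y).UN = {diagRel T.X}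
  hom_refl_f : ∀ (y : U.X) (x : T.X),
    (hom y y).f (coset {diagRel T.X} x) = coset {diagRel T.X} x
  /-- (3) `ζ_{y₂}^{y₁} = (ζ_{y₁}^{y₂})*` -/
  hom_symm_TN : ∀ y1 y2 : U.X, (hom y2 y1).TN = (hom y1 y2).UN
  hom_symm_UN : ∀ y1 y2 : U.X, (hom y2 y1).UN = (hom y1 y2).TN
  hom_symm_f : ∀ y1 y2 : U.X,
    Set.InvOn (hom y2 y1).f (hom y1 y2).f
      (cosets (hom y1 y2).TN) (cosets (hom y1 y2).UN)
  /-- (4) `ζ_{y₁}^{y₂}(τ)` depends only on the element `u ∈ U` containing `(y₁,y₂)` -/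
  zeta_welldef : ∀ u ∈ U.S, ∀ y1 y2 y1' y2' : U.X, (y1, y2) ∈ u → (y1', y2') ∈ u →
    ∀ Pp : Set (Set (T.X × T.X)),
      {u' | u' ∈ T.S ∧ ∃ t ∈ Pp,
        elemRel (hom y1 y2) ((Z y1).alpha t) ((Z y2).alpha u')} =
      {u' | u' ∈ T.S ∧ ∃ t ∈ Pp,
        elemRel (hom y1' y2') ((Z y1').alpha t) ((Z y2').alpha u')}
  /-- (5) `ζ_{y₁}^{y₃} ≤ ζ_{y₁}^{y₂} ζ_{y₂}^{y₃}` -/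
  le_comp : ∀ y1 y2 y3 : U.X,
    (hom y1 y3).TN ⊆ Tcomp (hom y1 y2) (hom y2 y3) ∧
    (hom y1 y3).UN ⊆ Vcomp (hom y1 y2) (hom y2 y3) ∧
    ∀ x x2 x3 : T.X,
      (hom y1 y2).f (coset (hom y1 y2).TN x) = coset (hom y1 y2).UN x2 →
      (hom y2 y3).f (coset (hom y2 y3).TN x2) = coset (hom y2 y3).UN x3 →
      (hom y1 y3).f (coset (hom y1 y3).TN x) ⊆
        coset (Vcomp (hom y1 y2) (hom y2 y3)) x3

/-- The map `ζ_u` on subsets of `τ` induced by any `(y₁,y₂) ∈ u`. -/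
def SchemeAction.zetaU {U T : BScheme} (act : SchemeAction U T)
    (u : Set (U.X × U.X)) (Pp : Set (Set (T.X × T.X))) : Set (Set (T.X × T.X)) :=
  {u' | ∃ y1 y2 : U.X, (y1, y2) ∈ u ∧ u' ∈ T.S ∧
    ∃ t ∈ Pp, elemRel (act.hom y1 y2) ((act.Z y1).alpha t) ((act.Z y2).alpha u')}

/-- The relation `[u,t]` on `Y × X`. -/
def SchemeAction.rel {U T : BScheme} (act : SchemeAction U T)
    (u : Set (U.X × U.X)) (t : Set (T.X × T.X)) :
    Set ((U.X × T.X) × (U.X × T.X)) :=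
  {w | (w.1.1, w.2.1) ∈ u ∧
    ((act.hom w.1.1 w.2.1).f (coset (act.hom w.1.1 w.2.1).TN w.1.2),
      coset (act.hom w.1.1 w.2.1).UN w.2.2) ∈
      quotRel (act.hom w.1.1 w.2.1).UN ((act.Z w.2.1).alpha t)}

/-- The semidirect product `U ⋉_ζ T` as a set of relations on `Y × X`. -/
def SchemeAction.sdp {U T : BScheme} (act : SchemeAction U T) :
    Set (Set ((U.X × T.X) × (U.X × T.X))) :=
  {r | ∃ u ∈ U.S, ∃ t ∈ T.S, r = act.rel u t}

/-- The valency `n_s = a_{s s* 1}` of a relation. -/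
noncomputable def nval {X : Type} (s : Set (X × X)) : ℕ :=
  aC s (transp s) (diagRel X)

/-! ### Auxiliary lemmas -/

section Aux

variable {X : Type}

lemma mem_transp {s : Set (X × X)} {w : X × X} : w ∈ transp s ↔ (w.2, w.1) ∈ s := by
  constructor
  · rintro ⟨p, hp, rfl⟩; simpa using hp
  · intro h; exact ⟨(w.2, w.1), h, by simp⟩

lemma aC_bdd [Fintype X] (p q r : Set (X × X)) :
    BddAbove {n | ∃ w ∈ r, n = Nat.card {z : X // (w.1, z) ∈ p ∧ (z, w.2) ∈ q}} := by
  refine ⟨Nat.card X, ?_⟩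
  rintro n ⟨w, hw, rfl⟩
  exact Nat.card_le_card_of_injective Subtype.val Subtype.val_injective

lemma aC_pos_iff [Fintype X] (p q r : Set (X × X)) :
    0 < aC p q r ↔ ∃ w ∈ r, ∃ z : X, (w.1, z) ∈ p ∧ (z, w.2) ∈ q := by
  constructor
  · intro h
    have hne : {n | ∃ w ∈ r, n = Nat.card {z : X // (w.1, z) ∈ p ∧ (z, w.2) ∈ q}}.Nonempty := by
      by_contra hc
      rw [Set.not_nonempty_iff_eq_empty] at hc
      rw [aC, hc] at h
      simp at h
    have hmem := Nat.sSup_mem hne (aC_bdd p q r)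
    obtain ⟨w, hw, hcard⟩ := hmem
    rw [aC] at h
    rw [hcard] at h
    have : Nonempty {z : X // (w.1, z) ∈ p ∧ (z, w.2) ∈ q} := Nat.card_pos_iff.mp h |>.1
    obtain ⟨z, hz1, hz2⟩ := this
    exact ⟨w, hw, z, hz1, hz2⟩
  · rintro ⟨w, hw, z, hz1, hz2⟩
    have h1 : 0 < Nat.card {z : X // (w.1, z) ∈ p ∧ (z, w.2) ∈ q} := by
      have : Nonempty {z : X // (w.1, z) ∈ p ∧ (z, w.2) ∈ q} := ⟨⟨z, hz1, hz2⟩⟩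
      exact Nat.card_pos
    have h2 : Nat.card {z : X // (w.1, z) ∈ p ∧ (z, w.2) ∈ q} ≤ aC p q r :=
      le_csSup (aC_bdd p q r) ⟨w, hw, rfl⟩
    omega

/-- In a scheme on a finite set, every relation has an outgoing edge at every point. -/
lemma exists_out [Fintype X] {S : Set (Set (X × X))} (hS : IsScheme S) {v : Set (X × X)}
    (hv : v ∈ S) (x : X) : ∃ y, (x, y) ∈ v := by
  obtain ⟨⟨a, b⟩, hab⟩ := hS.1 v hv
  have hdiag := hS.2.2.1
  have htv := hS.2.2.2.1 v hv
  have hconst := hS.2.2.2.2 v hv (transp v) htv (diagRel X) hdiag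
  have h1 := hconst (a, a) (by simp [diagRel])
  have h2 := hconst (x, x) (by simp [diagRel])
  have hpos : 0 < Nat.card {z : X // ((a, a).1, z) ∈ v ∧ (z, (a, a).2) ∈ transp v} := by
    have : Nonempty {z : X // ((a, a).1, z) ∈ v ∧ (z, (a, a).2) ∈ transp v} :=
      ⟨⟨b, hab, mem_transp.mpr hab⟩⟩
    exact Nat.card_pos
  rw [h1] at hpos
  rw [← h2] at hpos
  obtain ⟨z, hz1, _⟩ := (Nat.card_pos_iff.mp hpos).1
  exact ⟨z, hz1⟩

/-- In a scheme on a finite set, every relation has an incoming edge at every point. -/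
lemma exists_in [Fintype X] {S : Set (Set (X × X))} (hS : IsScheme S) {v : Set (X × X)}
    (hv : v ∈ S) (x : X) : ∃ y, (y, x) ∈ v := by
  obtain ⟨⟨a, b⟩, hab⟩ := hS.1 v hv
  have hdiag := hS.2.2.1
  have htv := hS.2.2.2.1 v hv
  have hconst := hS.2.2.2.2 (transp v) htv v hv (diagRel X) hdiag
  have h1 := hconst (b, b) (by simp [diagRel])
  have h2 := hconst (x, x) (by simp [diagRel])
  have hpos : 0 < Nat.card {z : X // ((b, b).1, z) ∈ transp v ∧ (z, (b, b).2) ∈ v} := by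
    have : Nonempty {z : X // ((b, b).1, z) ∈ transp v ∧ (z, (b, b).2) ∈ v} :=
      ⟨⟨a, mem_transp.mpr hab, hab⟩⟩
    exact Nat.card_pos
  rw [h1] at hpos
  rw [← h2] at hpos
  obtain ⟨z, _, hz2⟩ := (Nat.card_pos_iff.mp hpos).1
  exact ⟨z, hz2⟩

/-- A nonempty closed subset contains the diagonal. -/
lemma diag_mem_closed [Fintype X] {S Tc : Set (Set (X × X))} (hS : IsScheme S)
    (hT : IsClosedIn S Tc) {v : Set (X × X)} (hv : v ∈ Tc) : diagRel X ∈ Tc := by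
  apply hT.2 v hv v hv
  refine ⟨hS.2.2.1, ?_⟩
  rw [aC_pos_iff]
  obtain ⟨⟨a, b⟩, hab⟩ := hS.1 v (hT.1 hv)
  exact ⟨(b, b), by simp [diagRel], a, mem_transp.mpr hab, hab⟩

lemma mem_coset_self {Tc : Set (Set (X × X))} (hd : diagRel X ∈ Tc) (x : X) :
    x ∈ coset Tc x := ⟨diagRel X, hd, rfl⟩

lemma scheme_rel_unique {S : Set (Set (X × X))} (hS : IsScheme S) {s1 s2 : Set (X × X)}
    {w : X × X} (h1 : s1 ∈ S) (h2 : s2 ∈ S) (hw1 : w ∈ s1) (hw2 : w ∈ s2) : s1 = s2 := by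
  obtain ⟨s, _, hu⟩ := hS.2.1 w
  exact (hu s1 ⟨h1, hw1⟩).trans (hu s2 ⟨h2, hw2⟩).symm

lemma coset_diag (x : X) : coset {diagRel X} x = {x} := by
  ext y
  constructor
  · rintro ⟨t, ht, hxy⟩
    simp only [Set.mem_singleton_iff] at ht
    subst ht
    exact hxy.symm
  · rintro rfl
    exact ⟨diagRel X, rfl, rfl⟩

lemma quotRel_diag {s : Set (X × X)} {x1 x2 : X} :
    (coset {diagRel X} x1, coset {diagRel X} x2) ∈ quotRel {diagRel X} s ↔ (x1, x2) ∈ s := by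
  constructor
  · rintro ⟨a, b, heq, p, hp, hp1, hp2⟩
    simp only [coset_diag] at heq hp1 hp2
    rw [Prod.mk.injEq] at heq
    rw [← heq.1] at hp1
    rw [← heq.2] at hp2
    simp only [Set.mem_singleton_iff] at hp1 hp2
    have : p = (x1, x2) := Prod.ext hp1 hp2
    rwa [this] at hp
  · intro h
    refine ⟨x1, x2, rfl, (x1, x2), h, ?_, ?_⟩ <;>
      · rw [coset_diag]; rfl

section Act

variable {U T : BScheme}

lemma mem_rel_diag (act : SchemeAction U T) {t : Set (T.X × T.X)}
    {w : (U.X × T.X) × (U.X × T.X)} :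
    w ∈ act.rel (diagRel U.X) t ↔
      w.1.1 = w.2.1 ∧ (w.1.2, w.2.2) ∈ (act.Z w.2.1).alpha t := by
  constructor
  · rintro ⟨h1, h2⟩
    have hy : w.1.1 = w.2.1 := h1
    refine ⟨hy, ?_⟩
    rw [hy] at h2
    rw [act.hom_refl_TN, act.hom_refl_UN, act.hom_refl_f] at h2
    exact quotRel_diag.mp h2
  · rintro ⟨hy, h2⟩
    refine ⟨hy, ?_⟩
    rw [hy]
    rw [act.hom_refl_TN, act.hom_refl_UN, act.hom_refl_f]
    exact quotRel_diag.mpr h2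

lemma quotRel_nonempty {T' : Type} {Tc : Set (Set (T' × T'))} {v : Set (T' × T')}
    {w : Set T' × Set T'} (h : w ∈ quotRel Tc v) : ∃ u, u ∈ Tc := by
  obtain ⟨a, b, _, p, _, hp1, _⟩ := h
  obtain ⟨u, hu, _⟩ := hp1
  exact ⟨u, hu⟩

/-- Given a morphism in 𝒞 whose right normal closed subset contains the diagonal,
and a relation `v` of the target, for each target point there is a source point whose
image coset is `quotRel`-related to the coset of the target point. -/
lemma homC_exists_left {A B : BScheme} (φ : HomC A B) (hd : diagRel B.X ∈ φ.UN)
    {v : Set (B.X × B.X)} (hv : v ∈ B.S) (x2 : B.X) :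
    ∃ x' : A.X, (φ.f (coset φ.TN x'), coset φ.UN x2) ∈ quotRel φ.UN v := by
  haveI := B.fin
  obtain ⟨p1, hp1⟩ := exists_in B.isScheme hv x2
  have hsurj := φ.iso.1.2.1.2.2
  have hmem : coset φ.UN p1 ∈ (quotPres B.S φ.UN B.base).pts := ⟨p1, rfl⟩
  obtain ⟨C, hC, hCeq⟩ := hsurj hmem
  obtain ⟨x', rfl⟩ := hC
  refine ⟨x', p1, x2, ?_, (p1, x2), hp1, mem_coset_self hd p1, mem_coset_self hd x2⟩
  rw [hCeq]

lemma homC_exists_right {A B : BScheme} (φ : HomC A B) (hd : diagRel B.X ∈ φ.UN)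
    {v : Set (B.X × B.X)} (hv : v ∈ B.S) (x1 : A.X) :
    ∃ x2 : B.X, (φ.f (coset φ.TN x1), coset φ.UN x2) ∈ quotRel φ.UN v := by
  haveI := B.fin
  have hmaps := φ.iso.1.1.1
  have hmem : coset φ.TN x1 ∈ (quotPres A.S φ.TN A.base).pts := ⟨x1, rfl⟩
  obtain ⟨a, ha⟩ : ∃ a, φ.f (coset φ.TN x1) = coset φ.UN a := hmaps hmem
  obtain ⟨p2, hp2⟩ := exists_out B.isScheme hv a
  refine ⟨p2, a, p2, ?_, (a, p2), hp2, mem_coset_self hd a, mem_coset_self hd p2⟩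
  rw [ha]

end Act

lemma mem_setMulS {S Pp Qq : Set (Set (X × X))} {r : Set (X × X)} :
    r ∈ setMulS S Pp Qq ↔ ∃ p ∈ Pp, ∃ q ∈ Qq, r ∈ S ∧ 0 < aC p q r := by
  simp [setMulS, cmulS]
  tauto

end Aux

theorem stmt8 (U T : BScheme) (act : SchemeAction U T) :
    IsClosedIn act.sdp {r | ∃ t ∈ T.S, r = act.rel (diagRel U.X) t} ∧
    IsNormalIn act.sdp {r | ∃ t ∈ T.S, r = act.rel (diagRel U.X) t} ∧
    ∃ f : T.X → U.X × T.X,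
      IsIsoOn (fullPres T.S T.base)
        (subPres {r | ∃ t ∈ T.S, r = act.rel (diagRel U.X) t} (U.base, T.base))
        f := by
  haveI : Fintype U.X := U.fin
  haveI : Fintype T.X := T.fin
  have hTt_sub : {r | ∃ t ∈ T.S, r = act.rel (diagRel U.X) t} ⊆ act.sdp := by
    rintro r ⟨t, ht, rfl⟩
    exact ⟨diagRel U.X, U.isScheme.2.2.1, t, ht, rfl⟩
  -- Part 1: closedness
  have hclosed : IsClosedIn act.sdp {r | ∃ t ∈ T.S, r = act.rel (diagRel U.X) t} := by
    refine ⟨hTt_sub, ?_⟩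
    rintro p ⟨t1, ht1, rfl⟩ q ⟨t2, ht2, rfl⟩ r ⟨hrS, hpos⟩
    obtain ⟨u', hu', s', hs', rfl⟩ := hrS
    rw [aC_pos_iff] at hpos
    obtain ⟨w, hw, z, hz1, hz2⟩ := hpos
    rw [mem_transp] at hz1
    have e1 : z.1 = w.1.1 := ((mem_rel_diag act).mp hz1).1
    have e2 : z.1 = w.2.1 := ((mem_rel_diag act).mp hz2).1
    have hyy : (w.1.1, w.2.1) ∈ u' := hw.1
    have hdm : (w.1.1, w.2.1) ∈ diagRel U.X := e1.symm.trans e2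
    have hueq : u' = diagRel U.X :=
      scheme_rel_unique U.isScheme hu' U.isScheme.2.2.1 hyy hdm
    exact ⟨s', hs', by rw [hueq]⟩
  -- Part 2: normality
  have hnormal : IsNormalIn act.sdp {r | ∃ t ∈ T.S, r = act.rel (diagRel U.X) t} := by
    rintro p ⟨u, hu, s, hs, rfl⟩
    ext r
    rw [mem_setMulS, mem_setMulS]
    constructor
    · rintro ⟨a, ha, b, ⟨t, ht, rfl⟩, hrS, hpos⟩
      rw [Set.mem_singleton_iff] at ha; subst ha
      rw [aC_pos_iff] at hpos
      obtain ⟨w, hw, z, hz1, hz2⟩ := hpos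
      obtain ⟨⟨y1, x1⟩, y2x2⟩ := w
      obtain ⟨y2, x2⟩ := y2x2
      obtain ⟨yz, xz⟩ := z
      obtain ⟨he, hzt⟩ := (mem_rel_diag act).mp hz2
      simp only at he
      subst he
      obtain ⟨huu, hC⟩ := hz1
      have hd : diagRel T.X ∈ (act.hom y1 yz).UN := by
        obtain ⟨u0, hu0⟩ := quotRel_nonempty hC
        exact diag_mem_closed (act.Z yz).isScheme (act.hom y1 yz).UN_cl hu0
      have hv : (act.Z yz).alpha s ∈ (act.Z yz).rels := (act.Z yz).alpha_bij.1 hs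
      obtain ⟨x', hx'⟩ := homC_exists_left (act.hom y1 yz) hd hv x2
      obtain ⟨v', hv'S, hv'mem⟩ : ∃ v' ∈ (act.Z y1).rels, (x1, x') ∈ v' := by
        obtain ⟨v', ⟨hv'S, hm⟩, _⟩ := (act.Z y1).isScheme.2.1 (x1, x')
        exact ⟨v', hv'S, hm⟩
      obtain ⟨t', ht'S, ht'eq⟩ := (act.Z y1).alpha_bij.2.2 hv'S
      refine ⟨act.rel (diagRel U.X) t', ⟨t', ht'S, rfl⟩, act.rel u s, rfl, hrS, ?_⟩
      rw [aC_pos_iff]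
      refine ⟨((y1, x1), (yz, x2)), hw, (y1, x'), ?_, ?_⟩
      · exact (mem_rel_diag act).mpr ⟨rfl, by rw [ht'eq]; exact hv'mem⟩
      · exact ⟨huu, hx'⟩
    · rintro ⟨b, ⟨t', ht', rfl⟩, a, ha, hrS, hpos⟩
      rw [Set.mem_singleton_iff] at ha; subst ha
      rw [aC_pos_iff] at hpos
      obtain ⟨w, hw, z, hz1, hz2⟩ := hpos
      obtain ⟨⟨y1, x1⟩, y2x2⟩ := w
      obtain ⟨y2, x2⟩ := y2x2
      obtain ⟨yz, xz⟩ := z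
      obtain ⟨he, hzt⟩ := (mem_rel_diag act).mp hz1
      simp only at he
      subst he
      obtain ⟨huu, hC⟩ := hz2
      have hd : diagRel T.X ∈ (act.hom y1 y2).UN := by
        obtain ⟨u0, hu0⟩ := quotRel_nonempty hC
        exact diag_mem_closed (act.Z y2).isScheme (act.hom y1 y2).UN_cl hu0
      have hv : (act.Z y2).alpha s ∈ (act.Z y2).rels := (act.Z y2).alpha_bij.1 hs
      obtain ⟨x2', hx2'⟩ := homC_exists_right (act.hom y1 y2) hd hv x1
      obtain ⟨v', hv'S, hv'mem⟩ : ∃ v' ∈ (act.Z y2).rels, (x2', x2) ∈ v' := by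
        obtain ⟨v', ⟨hv'S, hm⟩, _⟩ := (act.Z y2).isScheme.2.1 (x2', x2)
        exact ⟨v', hv'S, hm⟩
      obtain ⟨t0, ht0S, ht0eq⟩ := (act.Z y2).alpha_bij.2.2 hv'S
      refine ⟨act.rel u s, rfl, act.rel (diagRel U.X) t0, ⟨t0, ht0S, rfl⟩, hrS, ?_⟩
      rw [aC_pos_iff]
      refine ⟨((y1, x1), (y2, x2)), hw, (y2, x2'), ⟨huu, hx2'⟩, ?_⟩
      exact (mem_rel_diag act).mpr ⟨rfl, by rw [ht0eq]; exact hv'mem⟩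
  -- Part 3: the subscheme on the coset of the basepoint is isomorphic to T
  have hbase_coset : ∀ w : U.X × T.X,
      w ∈ coset {r | ∃ t ∈ T.S, r = act.rel (diagRel U.X) t} (U.base, T.base) ↔
        w.1 = U.base := by
    intro w
    constructor
    · rintro ⟨tt, ⟨t, htS, rfl⟩, hmem⟩
      exact (((mem_rel_diag act).mp hmem).1).symm
    · intro h
      obtain ⟨t, ⟨htS, htm⟩, -⟩ := T.isScheme.2.1 (T.base, w.2)
      refine ⟨act.rel (diagRel U.X) t, ⟨t, htS, rfl⟩, (mem_rel_diag act).mpr ⟨h.symm, ?_⟩⟩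
      rw [h, act.base_alpha]
      exact htm
  have himg : ∀ s : Set (T.X × T.X), ∀ w : T.X × T.X,
      ((U.base, w.1), (U.base, w.2)) ∈ act.rel (diagRel U.X) s ↔ w ∈ s := by
    intro s w
    rw [mem_rel_diag]
    simp [act.base_alpha]
  refine ⟨hclosed, hnormal, fun x => (U.base, x), ⟨?_, ?_⟩, ⟨?_, ?_, ?_⟩, ?_⟩
  · -- MapsTo on points
    intro x _
    exact (hbase_coset (U.base, x)).mpr rfl
  · -- morphism on relations
    intro s hs w hw w' hw'
    refine ⟨act.rel (diagRel U.X) s ∩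
        (coset {r | ∃ t ∈ T.S, r = act.rel (diagRel U.X) t} (U.base, T.base) ×ˢ
         coset {r | ∃ t ∈ T.S, r = act.rel (diagRel U.X) t} (U.base, T.base)),
      ⟨act.rel (diagRel U.X) s, ⟨s, hs, rfl⟩, rfl⟩, ?_, ?_⟩
    · exact ⟨(himg s w).mpr hw, (hbase_coset _).mpr rfl, (hbase_coset _).mpr rfl⟩
    · exact ⟨(himg s w').mpr hw', (hbase_coset _).mpr rfl, (hbase_coset _).mpr rfl⟩
  · -- MapsTo for BijOn
    intro x _
    exact (hbase_coset (U.base, x)).mpr rfl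
  · -- InjOn
    intro a _ b _ h
    exact congrArg Prod.snd h
  · -- SurjOn
    intro w hw
    have h1 := (hbase_coset w).mp hw
    exact ⟨w.2, trivial, Prod.ext h1.symm rfl⟩
  · -- unique preimage relation
    rintro t ⟨tt, ⟨t0, ht0, rfl⟩, rfl⟩
    refine ⟨t0, ⟨ht0, ?_⟩, ?_⟩
    · intro w hw
      exact ⟨(himg t0 w).mpr hw, (hbase_coset _).mpr rfl, (hbase_coset _).mpr rfl⟩
    · rintro s ⟨hsS, hmap⟩
      obtain ⟨w, hw⟩ := T.isScheme.1 s hsS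
      have h2 := hmap w hw
      have h3 : w ∈ t0 := (himg t0 w).mp h2.1
      exact scheme_rel_unique T.isScheme hsS ht0 hw h3
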